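/- arXiv:2502.05300 — 3 statements merged into one kernel-verified Lean document; each statement's English description precedes it below -/
import Mathlib

section
/- Let ℓ: ℝ^d → ℝ be differentiable and G-invariant with P_G^T = P_G. If the initialization θ₀ satisfies P_G θ₀ = θ₀, then the entire gradient descent trajectory θ_{t+1} = θ_t − η ∇ℓ(θ_t) satisfies P_G θ_t = θ_t for all t ∈ ℕ. -/
/-!
A symmetric point `x` (one with `P x = x`) is fixed by every `ρ g`, since the average is.
Differentiating `ℓ ∘ ρ g = ℓ` at such a point shows that `⟪∇ℓ x, ρ g v⟫ = ⟪∇ℓ x, v⟫`, hence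
`⟪∇ℓ x, P v⟫ = ⟪∇ℓ x, v⟫`; as `P` is self-adjoint this says `P (∇ℓ x) = ∇ℓ x`. So the
symmetric points form a subspace containing the gradient at each of its points, and every
gradient step stays inside it.
-/

open RealInnerProductSpace

theorem ContinuousLinearEquiv.fderiv_apply_eq_of_comp_eq {E F : Type*}
    [NormedAddCommGroup E] [NormedSpace ℝ E] [NormedAddCommGroup F] [NormedSpace ℝ F]
    {f : E → F} (L : E ≃L[ℝ] E) (hf : f ∘ L = f) {x : E} (hx : L x = x) (v : E) :
    fderiv ℝ f x (L v) = fderiv ℝ f x v := by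
  have h := L.comp_right_fderiv (f := f) (x := x)
  rw [hf, hx] at h
  exact (DFunLike.congr_fun h v).symm

namespace Representation

variable {k G V : Type*} [Field k] [Group G] [Fintype G] [AddCommGroup V] [Module k V]
  (ρ : Representation k G V)

theorem apply_sum_apply (g : G) (v : V) : ρ g (∑ h, ρ h v) = ∑ h, ρ h v := by
  simp only [map_sum, ← Module.End.mul_apply, ← map_mul]
  exact Equiv.sum_comp (Equiv.mulLeft g) (fun h => ρ h v)

theorem apply_eq_of_average_eq {P : V →ₗ[k] V}
    (hP : ∀ v, P v = (Fintype.card G : k)⁻¹ • ∑ g, ρ g v) {x : V} (hx : P x = x) (g : G) :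
    ρ g x = x := by
  rw [← hx, hP, map_smul, apply_sum_apply]

end Representation

section InnerProductSpace

variable {G E : Type*} [Group G] [Fintype G]
  [NormedAddCommGroup E] [InnerProductSpace ℝ E] (ρ : Representation ℝ G E)
  {P : E →ₗ[ℝ] E} (hP : ∀ v, P v = (Fintype.card G : ℝ)⁻¹ • ∑ g, ρ g v)
  (hPsym : ∀ v w, ⟪P v, w⟫ = ⟪v, P w⟫)
include hP hPsym

theorem average_eq_of_inner_apply_eq {w : E} (hw : ∀ g v, ⟪w, ρ g v⟫ = ⟪w, v⟫) : P w = w := by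
  have hcard : (Fintype.card G : ℝ) ≠ 0 := Nat.cast_ne_zero.mpr Fintype.card_ne_zero
  refine ext_inner_right ℝ fun v => ?_
  rw [hPsym, hP, inner_smul_right, inner_sum]
  simp only [hw, Finset.sum_const, Finset.card_univ, nsmul_eq_mul]
  exact inv_mul_cancel_left₀ hcard _

theorem average_gradient_eq_of_average_eq [FiniteDimensional ℝ E] {ℓ : E → ℝ}
    (hinv : ∀ g θ, ℓ (ρ g θ) = ℓ θ) {x : E} (hx : P x = x) :
    P (gradient ℓ x) = gradient ℓ x := by
  refine average_eq_of_inner_apply_eq ρ hP hPsym fun g v => ?_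
  let L : E ≃L[ℝ] E :=
    (LinearMap.GeneralLinearGroup.toLinearEquiv (ρ.asGroupHom g)).toContinuousLinearEquiv
  simp only [inner_gradient_left]
  exact L.fderiv_apply_eq_of_comp_eq (funext (hinv g)) (ρ.apply_eq_of_average_eq hP hx g) v

end InnerProductSpace

theorem gradientDescent_trajectory_preserves_symmetry_general {G : Type*} [Group G] [Fintype G] {d : ℕ}
    (ρ : Representation ℝ G (EuclideanSpace ℝ (Fin d)))
    (ℓ : EuclideanSpace ℝ (Fin d) → ℝ)
    (hinv : ∀ (g : G) (θ : EuclideanSpace ℝ (Fin d)), ℓ (ρ g θ) = ℓ θ)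
    (P : EuclideanSpace ℝ (Fin d) →ₗ[ℝ] EuclideanSpace ℝ (Fin d))
    (hP : ∀ θ, P θ = ((Fintype.card G : ℝ))⁻¹ • ∑ g : G, ρ g θ)
    (hPsym : ∀ θ η' : EuclideanSpace ℝ (Fin d), ⟪P θ, η'⟫ = ⟪θ, P η'⟫)
    (η : ℝ) (θ : ℕ → EuclideanSpace ℝ (Fin d)) (hθ₀ : P (θ 0) = θ 0)
    (hstep : ∀ t : ℕ, θ (t + 1) = θ t - η • gradient ℓ (θ t)) :
    ∀ t : ℕ, P (θ t) = θ t := by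
  intro t
  induction t with
  | zero => exact hθ₀
  | succ t ih =>
    rw [hstep t, map_sub, map_smul, ih, average_gradient_eq_of_average_eq ρ hP hPsym hinv ih]

/-- The whole gradient-descent trajectory started at a G-symmetric point of a
G-invariant differentiable loss stays G-symmetric. -/
theorem gradientDescent_trajectory_preserves_symmetry {G : Type*} [Group G] [Fintype G] {d : ℕ}
    (ρ : Representation ℝ G (EuclideanSpace ℝ (Fin d)))
    (ℓ : EuclideanSpace ℝ (Fin d) → ℝ) (hℓ : Differentiable ℝ ℓ)
    (hinv : ∀ (g : G) (θ : EuclideanSpace ℝ (Fin d)), ℓ (ρ g θ) = ℓ θ)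
    (P : EuclideanSpace ℝ (Fin d) →ₗ[ℝ] EuclideanSpace ℝ (Fin d))
    (hP : ∀ θ, P θ = ((Fintype.card G : ℝ))⁻¹ • ∑ g : G, ρ g θ)
    (hPsym : ∀ θ η' : EuclideanSpace ℝ (Fin d), ⟪P θ, η'⟫ = ⟪θ, P η'⟫)
    (η : ℝ) (θ : ℕ → EuclideanSpace ℝ (Fin d)) (hθ₀ : P (θ 0) = θ 0)
    (hstep : ∀ t : ℕ, θ (t + 1) = θ t - η • gradient ℓ (θ t)) :
    ∀ t : ℕ, P (θ t) = θ t :=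
  gradientDescent_trajectory_preserves_symmetry_general ρ ℓ hinv P hP hPsym η θ hθ₀ hstep
end

section
/- Let ℓ₀: ℝ^d × ℝ^d → ℝ be differentiable with swap symmetry ℓ₀(u, w) = ℓ₀(w, u), and suppose there exist K > 0 and q ≥ 1 such that for all v, θ, |d/dz ℓ₀(v + zθ, v − zθ)| ≤ K ‖zθ‖^q ‖θ‖ (equivalently, ‖∇ℓ₀ along the antisymmetric direction‖ ≤ K‖zθ‖^q). Define ℓ(u,w) = ℓ₀(u,w) + γ(‖u‖² + ‖w‖²) with γ > 0. If (θ₁, θ₂) is a global minimum of ℓ, then −K‖θ₁−θ₂‖^{q+1} + (γ/2)‖θ₁−θ₂‖² ≤ 0. -/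
/-!
Compare the minimum `(θ₁, θ₂)` with the symmetric point `(m, m)`, `m = (θ₁ + θ₂)/2`. Weight decay
gains exactly `(γ/2)‖θ₁ - θ₂‖²` there, by the parallelogram law, while moving from `(m, m)` to
`(θ₁, θ₂) = (m + θ, m - θ)` along the antisymmetric path `s ↦ (m + sθ, m - sθ)` changes `ℓ₀` by at
most `K‖θ‖^(q+1)`, by the mean value inequality. Minimality says the gain cannot beat the change.
-/

open Real

theorem norm_sq_add_norm_sq_sub_two_mul_norm_midpoint_sq {E : Type*} [NormedAddCommGroup E]
    [InnerProductSpace ℝ E] (u w : E) :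
    ‖u‖ ^ 2 + ‖w‖ ^ 2 - 2 * ‖(2⁻¹ : ℝ) • (u + w)‖ ^ 2 = 2⁻¹ * ‖u - w‖ ^ 2 := by
  have hpar := parallelogram_law_with_norm ℝ u w
  rw [norm_smul, Real.norm_of_nonneg (by norm_num)]
  nlinarith [hpar]

theorem abs_sub_diag_le_of_antisymm_deriv_bound {E : Type*} [NormedAddCommGroup E]
    [NormedSpace ℝ E] (ℓ₀ : E → E → ℝ) (hdiff : Differentiable ℝ (fun p : E × E => ℓ₀ p.1 p.2))
    {K q : ℝ} (hK : 0 ≤ K) (hq : 0 ≤ q) (v θ : E)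
    (hgrad : ∀ z : ℝ, |deriv (fun s : ℝ => ℓ₀ (v + s • θ) (v - s • θ)) z| ≤ K * ‖z • θ‖ ^ q * ‖θ‖) :
    |ℓ₀ (v + θ) (v - θ) - ℓ₀ v v| ≤ K * ‖θ‖ ^ (q + 1) := by
  set f : ℝ → ℝ := fun s => ℓ₀ (v + s • θ) (v - s • θ)
  have hf : Differentiable ℝ f :=
    hdiff.comp (f := fun s : ℝ => (v + s • θ, v - s • θ)) (by fun_prop)
  have hbound : ∀ z ∈ Set.Ico (0 : ℝ) 1, ‖deriv f z‖ ≤ K * ‖θ‖ ^ q * ‖θ‖ := by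
    intro z hz
    have hzθ : ‖z • θ‖ ≤ ‖θ‖ := by
      rw [norm_smul, Real.norm_of_nonneg hz.1]
      exact mul_le_of_le_one_left (norm_nonneg θ) hz.2.le
    calc ‖deriv f z‖ ≤ K * ‖z • θ‖ ^ q * ‖θ‖ := hgrad z
      _ ≤ K * ‖θ‖ ^ q * ‖θ‖ := by gcongr
  have hmvt := norm_image_sub_le_of_norm_deriv_le_segment'
    (fun z _ => (hf z).hasDerivAt.hasDerivWithinAt) hbound 1 (Set.right_mem_Icc.mpr zero_le_one)
  rw [rpow_add' (norm_nonneg θ) (by linarith), rpow_one, ← mul_assoc]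
  simpa [f] using hmvt

theorem spaceQuantization_midpoint_inequality_general {d : ℕ}
    (ℓ₀ : EuclideanSpace ℝ (Fin d) → EuclideanSpace ℝ (Fin d) → ℝ)
    (hdiff : Differentiable ℝ (fun p : EuclideanSpace ℝ (Fin d) × EuclideanSpace ℝ (Fin d) =>
      ℓ₀ p.1 p.2))
    (K q : ℝ) (hK : 0 < K) (hq : 1 ≤ q)
    (hgrad : ∀ (v θ : EuclideanSpace ℝ (Fin d)) (z : ℝ),
      |deriv (fun s : ℝ => ℓ₀ (v + s • θ) (v - s • θ)) z| ≤ K * ‖z • θ‖ ^ q * ‖θ‖)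
    (γ : ℝ)
    (ℓ : EuclideanSpace ℝ (Fin d) → EuclideanSpace ℝ (Fin d) → ℝ)
    (hℓ : ∀ u w, ℓ u w = ℓ₀ u w + γ * (‖u‖ ^ 2 + ‖w‖ ^ 2))
    (θ₁ θ₂ : EuclideanSpace ℝ (Fin d)) (hmin : ∀ u w, ℓ θ₁ θ₂ ≤ ℓ u w) :
    -K * ‖θ₁ - θ₂‖ ^ (q + 1) + (γ / 2) * ‖θ₁ - θ₂‖ ^ 2 ≤ 0 := by
  set m := (2⁻¹ : ℝ) • (θ₁ + θ₂)
  set θ := (2⁻¹ : ℝ) • (θ₁ - θ₂)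
  have hpath := abs_sub_diag_le_of_antisymm_deriv_bound ℓ₀ hdiff hK.le (by linarith) m θ
    (hgrad m θ)
  rw [show m + θ = θ₁ by module, show m - θ = θ₂ by module] at hpath
  have hdecay := norm_sq_add_norm_sq_sub_two_mul_norm_midpoint_sq θ₁ θ₂
  have hcompare := hmin m m
  rw [hℓ, hℓ] at hcompare
  have hθ : ‖θ‖ ^ (q + 1) ≤ ‖θ₁ - θ₂‖ ^ (q + 1) := by
    rw [norm_smul, Real.norm_of_nonneg (by norm_num)]
    gcongr
    linarith [norm_nonneg (θ₁ - θ₂)]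
  linear_combination (abs_le.mp hpath).1 + hcompare + K * hθ - γ * hdecay

/-- Midpoint comparison at a global minimum of a swap-symmetric loss with weight decay:
`−K‖θ₁−θ₂‖^{q+1} + (γ/2)‖θ₁−θ₂‖² ≤ 0`. -/
theorem spaceQuantization_midpoint_inequality {d : ℕ}
    (ℓ₀ : EuclideanSpace ℝ (Fin d) → EuclideanSpace ℝ (Fin d) → ℝ)
    (hdiff : Differentiable ℝ (fun p : EuclideanSpace ℝ (Fin d) × EuclideanSpace ℝ (Fin d) =>
      ℓ₀ p.1 p.2))
    (hsym : ∀ u w, ℓ₀ u w = ℓ₀ w u)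
    (K q : ℝ) (hK : 0 < K) (hq : 1 ≤ q)
    (hgrad : ∀ (v θ : EuclideanSpace ℝ (Fin d)) (z : ℝ),
      |deriv (fun s : ℝ => ℓ₀ (v + s • θ) (v - s • θ)) z| ≤ K * ‖z • θ‖ ^ q * ‖θ‖)
    (γ : ℝ) (hγ : 0 < γ)
    (ℓ : EuclideanSpace ℝ (Fin d) → EuclideanSpace ℝ (Fin d) → ℝ)
    (hℓ : ∀ u w, ℓ u w = ℓ₀ u w + γ * (‖u‖ ^ 2 + ‖w‖ ^ 2))
    (θ₁ θ₂ : EuclideanSpace ℝ (Fin d)) (hmin : ∀ u w, ℓ θ₁ θ₂ ≤ ℓ u w) :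
    -K * ‖θ₁ - θ₂‖ ^ (q + 1) + (γ / 2) * ‖θ₁ - θ₂‖ ^ 2 ≤ 0 :=
  spaceQuantization_midpoint_inequality_general ℓ₀ hdiff K q hK hq hgrad γ ℓ hℓ θ₁ θ₂ hmin
end

section
/- Under the hypotheses of the previous statement with q > 1: if (θ₁, θ₂) is a global minimum of ℓ(u,w) = ℓ₀(u,w) + γ(‖u‖²+‖w‖²) and θ₁ ≠ θ₂, then ‖θ₁ − θ₂‖ ≥ (γ/(2K))^{1/(q−1)}. -/
/-! Write `θ₁ = v + θ`, `θ₂ = v - θ`. Merging the two neurons into `(v, v)` leaves `ℓ₀` changed by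
the drop of `s ↦ ℓ₀ (v + s • θ) (v - s • θ)` over `[0, 1]`, which by the mean value theorem and
the gradient bound is at most `K ‖θ‖ ^ (q + 1)`, while by the parallelogram law it lowers the
weight decay by exactly `2 γ ‖θ‖ ^ 2`. Global minimality thus forces `2 γ ≤ K ‖θ‖ ^ (q - 1)`,
and since `q > 1` this bounds `‖θ‖` from below. -/

section AntisymmPath

variable {E : Type*} [NormedAddCommGroup E] [NormedSpace ℝ E]

def antisymmPath (L : E → E → ℝ) (v θ : E) (s : ℝ) : ℝ := L (v + s • θ) (v - s • θ)

theorem differentiable_antisymmPath {L : E → E → ℝ}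
    (hL : Differentiable ℝ (fun p : E × E => L p.1 p.2)) (v θ : E) :
    Differentiable ℝ (antisymmPath L v θ) :=
  hL.comp (f := fun s : ℝ => (v + s • θ, v - s • θ)) (by fun_prop)

theorem sub_antisymmPath_le {L : E → E → ℝ}
    (hL : Differentiable ℝ (fun p : E × E => L p.1 p.2)) {K q : ℝ} (hK : 0 ≤ K) (hq : 0 ≤ q)
    {v θ : E} (hgrad : ∀ z, |deriv (antisymmPath L v θ) z| ≤ K * ‖z • θ‖ ^ q * ‖θ‖) :
    L v v - L (v + θ) (v - θ) ≤ K * ‖θ‖ ^ q * ‖θ‖ := by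
  have hf := differentiable_antisymmPath hL v θ
  have hdrop : ‖antisymmPath L v θ 1 - antisymmPath L v θ 0‖ ≤ K * ‖θ‖ ^ q * ‖θ‖ := by
    refine norm_image_sub_le_of_norm_deriv_le_segment_01'
      (fun x _ => (hf x).hasDerivAt.hasDerivWithinAt) fun z hz => ?_
    have hz1 : |z| ≤ 1 := abs_le.2 ⟨by linarith [hz.1], hz.2.le⟩
    calc ‖deriv (antisymmPath L v θ) z‖ ≤ K * ‖z • θ‖ ^ q * ‖θ‖ := hgrad z
      _ ≤ K * ‖θ‖ ^ q * ‖θ‖ := by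
        gcongr
        rw [norm_smul, Real.norm_eq_abs]
        exact mul_le_of_le_one_left (norm_nonneg _) hz1
  simp only [antisymmPath, one_smul, zero_smul, add_zero, sub_zero, Real.norm_eq_abs] at hdrop
  rw [abs_sub_comm] at hdrop
  exact (le_abs_self _).trans hdrop

end AntisymmPath

theorem le_mul_rpow_sub_one_of_mul_sq_le {a K q t : ℝ} (ht : 0 < t)
    (h : a * t ^ 2 ≤ K * t ^ q * t) : a ≤ K * t ^ (q - 1) := by
  rw [Real.rpow_sub_one ht.ne', mul_div_assoc', le_div_iff₀ ht]
  nlinarith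

theorem div_rpow_one_div_le_of_le_mul_rpow {a K p t : ℝ} (ha : 0 ≤ a) (hK : 0 < K) (hp : 0 < p)
    (ht : 0 ≤ t) (h : a ≤ K * t ^ p) : (a / K) ^ (1 / p) ≤ t := by
  rwa [one_div, Real.rpow_inv_le_iff_of_pos (div_nonneg ha hK.le) ht hp, div_le_iff₀' hK]

theorem spaceQuantization_separation_general {d : ℕ}
    (ℓ₀ : EuclideanSpace ℝ (Fin d) → EuclideanSpace ℝ (Fin d) → ℝ)
    (hdiff : Differentiable ℝ (fun p : EuclideanSpace ℝ (Fin d) × EuclideanSpace ℝ (Fin d) =>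
      ℓ₀ p.1 p.2))
    (K q : ℝ) (hK : 0 < K) (hq : 1 < q)
    (hgrad : ∀ (v θ : EuclideanSpace ℝ (Fin d)) (z : ℝ),
      |deriv (fun s : ℝ => ℓ₀ (v + s • θ) (v - s • θ)) z| ≤ K * ‖z • θ‖ ^ q * ‖θ‖)
    (γ : ℝ) (hγ : 0 < γ)
    (ℓ : EuclideanSpace ℝ (Fin d) → EuclideanSpace ℝ (Fin d) → ℝ)
    (hℓ : ∀ u w, ℓ u w = ℓ₀ u w + γ * (‖u‖ ^ 2 + ‖w‖ ^ 2))
    (θ₁ θ₂ : EuclideanSpace ℝ (Fin d)) (hmin : ∀ u w, ℓ θ₁ θ₂ ≤ ℓ u w)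
    (hne : θ₁ ≠ θ₂) :
    (γ / (2 * K)) ^ (1 / (q - 1)) ≤ ‖θ₁ - θ₂‖ := by
  obtain ⟨v, θ, rfl, rfl⟩ : ∃ v θ, θ₁ = v + θ ∧ θ₂ = v - θ :=
    ⟨(2 : ℝ)⁻¹ • (θ₁ + θ₂), (2 : ℝ)⁻¹ • (θ₁ - θ₂), by module, by module⟩
  have hθ : 0 < ‖θ‖ := norm_pos_iff.2 fun h => hne (by simp [h])
  have hdecay : 2 * γ * ‖θ‖ ^ 2 ≤ ℓ₀ v v - ℓ₀ (v + θ) (v - θ) := by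
    have := hmin v v
    rw [hℓ, hℓ] at this
    nlinarith [parallelogram_law_with_norm ℝ v θ]
  have hdrop := sub_antisymmPath_le hdiff hK.le (by linarith) (hgrad v θ)
  have hgap := le_mul_rpow_sub_one_of_mul_sq_le hθ (hdecay.trans hdrop)
  calc (γ / (2 * K)) ^ (1 / (q - 1)) = (γ / 2 / K) ^ (1 / (q - 1)) := by rw [div_div]
    _ ≤ ‖θ‖ := div_rpow_one_div_le_of_le_mul_rpow (by positivity) hK (by linarith) hθ.le
        (by linarith)
    _ ≤ ‖(v + θ) - (v - θ)‖ := by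
      rw [show (v + θ) - (v - θ) = (2 : ℝ) • θ by module, norm_smul, Real.norm_two]
      linarith

/-- Quantized minimum separation: at a global minimum of a swap-symmetric loss with
weight decay and `q > 1`, distinct neuron weight vectors satisfy
`‖θ₁ − θ₂‖ ≥ (γ/(2K))^{1/(q−1)}`. -/
theorem spaceQuantization_separation {d : ℕ}
    (ℓ₀ : EuclideanSpace ℝ (Fin d) → EuclideanSpace ℝ (Fin d) → ℝ)
    (hdiff : Differentiable ℝ (fun p : EuclideanSpace ℝ (Fin d) × EuclideanSpace ℝ (Fin d) =>
      ℓ₀ p.1 p.2))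
    (hsym : ∀ u w, ℓ₀ u w = ℓ₀ w u)
    (K q : ℝ) (hK : 0 < K) (hq : 1 < q)
    (hgrad : ∀ (v θ : EuclideanSpace ℝ (Fin d)) (z : ℝ),
      |deriv (fun s : ℝ => ℓ₀ (v + s • θ) (v - s • θ)) z| ≤ K * ‖z • θ‖ ^ q * ‖θ‖)
    (γ : ℝ) (hγ : 0 < γ)
    (ℓ : EuclideanSpace ℝ (Fin d) → EuclideanSpace ℝ (Fin d) → ℝ)
    (hℓ : ∀ u w, ℓ u w = ℓ₀ u w + γ * (‖u‖ ^ 2 + ‖w‖ ^ 2))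
    (θ₁ θ₂ : EuclideanSpace ℝ (Fin d)) (hmin : ∀ u w, ℓ θ₁ θ₂ ≤ ℓ u w)
    (hne : θ₁ ≠ θ₂) :
    (γ / (2 * K)) ^ (1 / (q - 1)) ≤ ‖θ₁ - θ₂‖ :=
  spaceQuantization_separation_general ℓ₀ hdiff K q hK hq hgrad γ hγ ℓ hℓ θ₁ θ₂ hmin hne
end
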